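/- arXiv:1610.07160 — 2 statements merged into one kernel-verified Lean document; each statement's English description precedes it below -/
import Mathlib

section
/- In any finite-stage two-player game with alternating moves, either (i) player 1 has a basic winning strategy, or (ii) player 2 has a basic winning strategy, or (iii) player 1 has a basic unbeatable strategy and player 2 has a basic unbeatable strategy, where a basic strategy is one in which each move depends only on the previous moves of the rival. -/
/-- A strategy of player 1 in a finite-stage two-player game with alternating
moves of length `N`: for each stage `t ≤ N`, a map from the pair of partial
histories `(a_0,…,a_{t-1})` and `(b_0,…,b_{t-1})` to an action in `A`. -/
def Strat1 (A B : Type*) (N : ℕ) : Type _ :=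
  ∀ t : Fin (N + 1), (Fin t → A) → (Fin t → B) → A

/-- A strategy of player 2: for each stage `t ≤ N`, a map from the pair of
partial histories `(a_0,…,a_t)` and `(b_0,…,b_{t-1})` to an action in `B`. -/
def Strat2 (A B : Type*) (N : ℕ) : Type _ :=
  ∀ t : Fin (N + 1), (Fin (t + 1) → A) → (Fin t → B) → B

/-- The pair of partial histories of play of length `t` generated by the
strategy profile `(ξ, η)`:  `a_t = x_t(a^{t-1}, b^{t-1})`, `b_t = y_t(a^t, b^{t-1})`. -/
noncomputable def play {A B : Type*} [Nonempty A] [Nonempty B] {N : ℕ}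
    (ξ : Strat1 A B N) (η : Strat2 A B N) : (t : ℕ) → (Fin t → A) × (Fin t → B)
  | 0 => (Fin.elim0, Fin.elim0)
  | t + 1 =>
      let p := play ξ η t
      if h : t < N + 1 then
        let a : A := ξ ⟨t, h⟩ p.1 p.2
        let b : B := η ⟨t, h⟩ (Fin.snoc p.1 a) p.2
        (Fin.snoc p.1 a, Fin.snoc p.2 b)
      else (fun _ => Classical.arbitrary A, fun _ => Classical.arbitrary B)

/-- The outcome (whole history) `h(ξ,η) = (a_0,…,a_N, b_0,…,b_N)` of the game. -/
noncomputable def hist {A B : Type*} [Nonempty A] [Nonempty B] {N : ℕ}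
    (ξ : Strat1 A B N) (η : Strat2 A B N) :
    (Fin (N + 1) → A) × (Fin (N + 1) → B) :=
  play ξ η (N + 1)

/-- `ξ` is a winning strategy for player 1: `U(ξ,η) > V(ξ,η)` for every `η`. -/
def Winning1 {A B : Type*} [Nonempty A] [Nonempty B] {N : ℕ}
    (u v : (Fin (N + 1) → A) × (Fin (N + 1) → B) → ℝ) (ξ : Strat1 A B N) : Prop :=
  ∀ η : Strat2 A B N, v (hist ξ η) < u (hist ξ η)

/-- `ξ` is an unbeatable strategy for player 1: `U(ξ,η) ≥ V(ξ,η)` for every `η`. -/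
def Unbeatable1 {A B : Type*} [Nonempty A] [Nonempty B] {N : ℕ}
    (u v : (Fin (N + 1) → A) × (Fin (N + 1) → B) → ℝ) (ξ : Strat1 A B N) : Prop :=
  ∀ η : Strat2 A B N, v (hist ξ η) ≤ u (hist ξ η)

/-- `η` is a winning strategy for player 2: `V(ξ,η) > U(ξ,η)` for every `ξ`. -/
def Winning2 {A B : Type*} [Nonempty A] [Nonempty B] {N : ℕ}
    (u v : (Fin (N + 1) → A) × (Fin (N + 1) → B) → ℝ) (η : Strat2 A B N) : Prop :=
  ∀ ξ : Strat1 A B N, u (hist ξ η) < v (hist ξ η)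

/-- `η` is an unbeatable strategy for player 2: `V(ξ,η) ≥ U(ξ,η)` for every `ξ`. -/
def Unbeatable2 {A B : Type*} [Nonempty A] [Nonempty B] {N : ℕ}
    (u v : (Fin (N + 1) → A) × (Fin (N + 1) → B) → ℝ) (η : Strat2 A B N) : Prop :=
  ∀ ξ : Strat1 A B N, u (hist ξ η) ≤ v (hist ξ η)

/-- A strategy of player 1 is basic if each move depends only on the previous
moves of the rival. -/
def IsBasic1 {A B : Type*} {N : ℕ} (ξ : Strat1 A B N) : Prop :=
  ∀ (t : Fin (N + 1)) (as as' : Fin t → A) (bs : Fin t → B), ξ t as bs = ξ t as' bs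

/-- A strategy of player 2 is basic if each move depends only on the previous
moves of the rival. -/
def IsBasic2 {A B : Type*} {N : ℕ} (η : Strat2 A B N) : Prop :=
  ∀ (t : Fin (N + 1)) (as : Fin (t + 1) → A) (bs bs' : Fin t → B), η t as bs = η t as bs'

/-- The sequence of partial histories of player 1's moves generated by the
strategy `ξ` against the fixed move sequence `bs` of player 2. -/
noncomputable def play1 {A B : Type*} [Nonempty A] {N : ℕ}
    (ξ : Strat1 A B N) (bs : Fin (N + 1) → B) : (t : ℕ) → Fin t → A
  | 0 => Fin.elim0
  | t + 1 =>
      let p := play1 ξ bs t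
      if h : t < N + 1 then
        Fin.snoc p (ξ ⟨t, h⟩ p (fun i => bs ⟨i.val, lt_trans i.isLt h⟩))
      else fun _ => Classical.arbitrary A

/-- The sequence of partial histories of player 2's moves generated by the
strategy `η` against the fixed move sequence `as` of player 1. -/
noncomputable def play2 {A B : Type*} [Nonempty B] {N : ℕ}
    (η : Strat2 A B N) (as : Fin (N + 1) → A) : (t : ℕ) → Fin t → B
  | 0 => Fin.elim0
  | t + 1 =>
      let p := play2 η as t
      if h : t < N + 1 then
        Fin.snoc p (η ⟨t, h⟩
          (fun i => as ⟨i.val, Nat.lt_of_le_of_lt (Nat.le_of_lt_succ i.isLt) h⟩) p)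
      else fun _ => Classical.arbitrary B

/-!
Backward induction. Call a condition `W` on outcomes determined if player 1 has a basic strategy
forcing `W` or player 2 has a basic strategy forcing `¬ W`. After the first moves `a₀, b₀` the rest
of a game of length `N + 1` is a game of length `N` with condition `W (a₀ :: ·, b₀ :: ·)`, which is
determined by induction. If some `a₀` lets player 1 win every such subgame, he plays `a₀` followed
by a winning strategy of the subgame chosen according to `b₀`; otherwise player 2 answers each `a₀`
by a `b₀` and a winning strategy of that subgame chosen according to `a₀`. Since a player's own
past moves are determined by the rival's under a fixed strategy, these glued strategies are again
basic. Applying determinacy to `V < U` and to `V ≤ U` yields the trichotomy.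
-/

theorem exists_forall_or_exists_forall_not {α β : Sort*} (P : α → β → Prop) :
    (∃ a, ∀ b, P a b) ∨ ∃ f : α → β, ∀ a, ¬ P a (f a) := by
  by_cases h : ∃ a, ∀ b, P a b
  · exact Or.inl h
  · push Not at h
    exact Or.inr (Classical.skolem.1 h)

section Zermelo

variable {A B : Type*} {N : ℕ}

def consMoves {n : ℕ} (a : A) (b : B) (p : (Fin n → A) × (Fin n → B)) :
    (Fin (n + 1) → A) × (Fin (n + 1) → B) :=
  (Fin.cons a p.1, Fin.cons b p.2)

namespace Strat1

def first (ξ : Strat1 A B N) : A :=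
  ξ 0 Fin.elim0 Fin.elim0

def tail (ξ : Strat1 A B (N + 1)) (a : A) (b : B) : Strat1 A B N :=
  fun t as bs => ξ t.succ (Fin.cons a as) (Fin.cons b bs)

def cons (a : A) (ξ : B → Strat1 A B N) : Strat1 A B (N + 1) :=
  Fin.cases (motive := fun t : Fin (N + 2) => (Fin t → A) → (Fin t → B) → A)
    (fun _ _ => a)
    (fun t as bs => ξ (bs ⟨0, t.succ_pos⟩) t (Fin.tail as) (Fin.tail bs))

theorem isBasic1_cons (a : A) {ξ : B → Strat1 A B N} (hξ : ∀ b, IsBasic1 (ξ b)) :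
    IsBasic1 (cons a ξ) :=
  Fin.cases (fun _ _ _ => rfl) (fun t _ _ _ => hξ _ t _ _ _)

end Strat1

namespace Strat2

def first (η : Strat2 A B N) (a : A) : B :=
  η 0 (Fin.snoc Fin.elim0 a) Fin.elim0

def tail (η : Strat2 A B (N + 1)) (a : A) (b : B) : Strat2 A B N :=
  fun t as bs => η t.succ (Fin.cons a as) (Fin.cons b bs)

def cons (f : A → B) (η : A → Strat2 A B N) : Strat2 A B (N + 1) :=
  Fin.cases (motive := fun t : Fin (N + 2) => (Fin (t + 1) → A) → (Fin t → B) → B)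
    (fun as _ => f (as 0))
    (fun t as bs => η (as 0) t (Fin.tail as) (Fin.tail bs))

theorem first_cons (f : A → B) (η : A → Strat2 A B N) (a : A) : (cons f η).first a = f a :=
  rfl

theorem isBasic2_cons (f : A → B) {η : A → Strat2 A B N} (hη : ∀ a, IsBasic2 (η a)) :
    IsBasic2 (cons f η) :=
  Fin.cases (fun _ _ _ => rfl) (fun t _ _ _ => hη _ t _ _ _)

end Strat2

variable [Nonempty A] [Nonempty B]

theorem play_succ (ξ : Strat1 A B N) (η : Strat2 A B N) {t : ℕ} (ht : t < N + 1) :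
    play ξ η (t + 1) =
      (Fin.snoc (play ξ η t).1 (ξ ⟨t, ht⟩ (play ξ η t).1 (play ξ η t).2),
        Fin.snoc (play ξ η t).2
          (η ⟨t, ht⟩ (Fin.snoc (play ξ η t).1 (ξ ⟨t, ht⟩ (play ξ η t).1 (play ξ η t).2))
            (play ξ η t).2)) := by
  rw [play, dif_pos ht]

theorem play_one (ξ : Strat1 A B N) (η : Strat2 A B N) :
    play ξ η 1 = consMoves ξ.first (η.first ξ.first) (Fin.elim0, Fin.elim0) := by
  rw [play_succ ξ η N.succ_pos]
  ext i <;> fin_cases i <;> rfl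

theorem hist_zero (ξ : Strat1 A B 0) (η : Strat2 A B 0) :
    hist ξ η = consMoves ξ.first (η.first ξ.first) (Fin.elim0, Fin.elim0) :=
  play_one ξ η

theorem play_succ_eq_consMoves (ξ : Strat1 A B (N + 1)) (η : Strat2 A B (N + 1)) {t : ℕ}
    (ht : t ≤ N + 1) :
    play ξ η (t + 1) = consMoves ξ.first (η.first ξ.first)
      (play (ξ.tail ξ.first (η.first ξ.first)) (η.tail ξ.first (η.first ξ.first)) t) := by
  induction t with
  | zero => exact play_one ξ η
  | succ t ih =>
    rw [play_succ ξ η (Nat.succ_lt_succ ht), ih (Nat.le_of_succ_le ht), play_succ _ _ ht]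
    simp only [consMoves, Strat1.tail, Strat2.tail, Fin.cons_snoc_eq_snoc_cons]
    rfl

theorem hist_succ (ξ : Strat1 A B (N + 1)) (η : Strat2 A B (N + 1)) :
    hist ξ η = consMoves ξ.first (η.first ξ.first)
      (hist (ξ.tail ξ.first (η.first ξ.first)) (η.tail ξ.first (η.first ξ.first))) :=
  play_succ_eq_consMoves ξ η le_rfl

theorem determined_basic (N : ℕ) (W : (Fin (N + 1) → A) × (Fin (N + 1) → B) → Prop) :
    (∃ ξ : Strat1 A B N, IsBasic1 ξ ∧ ∀ η, W (hist ξ η)) ∨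
      (∃ η : Strat2 A B N, IsBasic2 η ∧ ∀ ξ, ¬ W (hist ξ η)) := by
  induction N with
  | zero =>
    rcases exists_forall_or_exists_forall_not
        (fun a b => W (consMoves a b (Fin.elim0, Fin.elim0))) with ⟨a, ha⟩ | ⟨f, hf⟩
    · exact Or.inl ⟨fun _ _ _ => a, fun _ _ _ _ => rfl, fun η => hist_zero _ η ▸ ha _⟩
    · exact Or.inr ⟨fun _ as _ => f (as 0), fun _ _ _ _ => rfl, fun ξ => hist_zero ξ _ ▸ hf _⟩
  | succ N ih =>
    rcases exists_forall_or_exists_forall_not (fun a b =>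
        ∃ ξ : Strat1 A B N, IsBasic1 ξ ∧ ∀ η, W (consMoves a b (hist ξ η))) with
      ⟨a, ha⟩ | ⟨f, hf⟩
    · choose ξ hξ hwin using ha
      refine Or.inl ⟨Strat1.cons a ξ, Strat1.isBasic1_cons a hξ, fun η => ?_⟩
      rw [hist_succ]
      exact hwin _ _
    · have hlose : ∀ a, ∃ η : Strat2 A B N, IsBasic2 η ∧
          ∀ ξ, ¬ W (consMoves a (f a) (hist ξ η)) :=
        fun a => (ih (W ∘ consMoves a (f a))).resolve_left (hf a)
      choose η hη hlose using hlose
      refine Or.inr ⟨Strat2.cons f η, Strat2.isBasic2_cons f hη, fun ξ => ?_⟩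
      rw [hist_succ, Strat2.first_cons]
      exact hlose _ _

end Zermelo

/-- **Zermelo's theorem with basic strategies.** In any finite-stage
two-player game with alternating moves, either player 1 has a basic winning
strategy, or player 2 has a basic winning strategy, or both players have
basic unbeatable strategies. -/
theorem zermelo_basic {A B : Type*} [Nonempty A] [Nonempty B] {N : ℕ}
    (u v : (Fin (N + 1) → A) × (Fin (N + 1) → B) → ℝ) :
    (∃ ξ : Strat1 A B N, IsBasic1 ξ ∧ Winning1 u v ξ) ∨
    (∃ η : Strat2 A B N, IsBasic2 η ∧ Winning2 u v η) ∨
    ((∃ ξ : Strat1 A B N, IsBasic1 ξ ∧ Unbeatable1 u v ξ) ∧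
      (∃ η : Strat2 A B N, IsBasic2 η ∧ Unbeatable2 u v η)) := by
  rcases determined_basic N (fun p => v p < u p) with ⟨ξ, hξb, hξ⟩ | ⟨η, hηb, hη⟩
  · exact Or.inl ⟨ξ, hξb, hξ⟩
  rcases determined_basic N (fun p => v p ≤ u p) with ⟨ξ, hξb, hξ⟩ | ⟨η', hηb', hη'⟩
  · exact Or.inr (Or.inr ⟨⟨ξ, hξb, hξ⟩, ⟨η, hηb, fun ξ' => le_of_not_gt (hη ξ')⟩⟩)
  · exact Or.inr (Or.inl ⟨η', hηb', fun ξ' => lt_of_not_ge (hη' ξ')⟩)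
end

section
/- In any finite-stage two-player game with alternating moves, either player 1 has a basic winning strategy or player 2 has a basic unbeatable strategy. -/
/-!
Backward induction (Zermelo). Call a position at stage `t` good for player 1 if some move of
player 1 leads, whatever the reply, to a good position at stage `t + 1`, the good positions at
the end being the outcomes in the target set. Always moving to a good position keeps player 1 on
good positions if the empty position is good; otherwise player 2 can always reply so as to keep
the position bad. Finally every strategy has the same outcomes as a basic one: a player's own
past moves can be recomputed from the rival's past moves by replaying the strategy.
-/

section Play

variable {A B : Type*} [Nonempty A] [Nonempty B] {N : ℕ}

lemma play_succ_fst (ξ : Strat1 A B N) (η : Strat2 A B N) {t : ℕ} (ht : t < N + 1) :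
    (play ξ η (t + 1)).1 =
      Fin.snoc (play ξ η t).1 (ξ ⟨t, ht⟩ (play ξ η t).1 (play ξ η t).2) := by
  rw [play, dif_pos ht]

lemma play_succ_snd (ξ : Strat1 A B N) (η : Strat2 A B N) {t : ℕ} (ht : t < N + 1) :
    (play ξ η (t + 1)).2 =
      Fin.snoc (play ξ η t).2 (η ⟨t, ht⟩ (play ξ η (t + 1)).1 (play ξ η t).2) := by
  rw [play_succ_fst ξ η ht, play, dif_pos ht]

end Play

section Determinacy

variable {A B : Type*} {N : ℕ} (W : Set ((Fin (N + 1) → A) × (Fin (N + 1) → B)))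

/-- Player 1 can force the outcome into `W` from the position `(as, bs)` at stage `t`. -/
def CanForce (t : ℕ) (as : Fin t → A) (bs : Fin t → B) : Prop :=
  if h : N + 1 ≤ t then (as ∘ Fin.castLE h, bs ∘ Fin.castLE h) ∈ W
  else ∃ a, ∀ b, CanForce (t + 1) (Fin.snoc as a) (Fin.snoc bs b)
termination_by N + 1 - t

lemma canForce_of_lt {t : ℕ} (ht : t < N + 1) (as : Fin t → A) (bs : Fin t → B) :
    CanForce W t as bs ↔ ∃ a, ∀ b, CanForce W (t + 1) (Fin.snoc as a) (Fin.snoc bs b) := by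
  rw [CanForce, dif_neg (not_le.mpr ht)]

lemma canForce_last (as : Fin (N + 1) → A) (bs : Fin (N + 1) → B) :
    CanForce W (N + 1) as bs ↔ (as, bs) ∈ W := by
  rw [CanForce, dif_pos le_rfl]
  rfl

variable [Nonempty A] [Nonempty B]

/-- Player 1 moves to a position from which `W` can still be forced, whenever there is one. -/
noncomputable def forcingStrat1 : Strat1 A B N := fun t as bs =>
  Classical.epsilon fun a => ∀ b, CanForce W (t + 1) (Fin.snoc as a) (Fin.snoc bs b)

/-- Player 2 replies so that `W` cannot be forced, whenever such a reply exists. -/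
noncomputable def spoilingStrat2 : Strat2 A B N := fun t as bs =>
  Classical.epsilon fun b => ¬ CanForce W (t + 1) as (Fin.snoc bs b)

lemma canForce_play_forcingStrat1 (hW : CanForce W 0 Fin.elim0 Fin.elim0) (η : Strat2 A B N) :
    ∀ t ≤ N + 1, CanForce W t (play (forcingStrat1 W) η t).1 (play (forcingStrat1 W) η t).2
  | 0, _ => hW
  | t + 1, ht => by
    have hgood := (canForce_of_lt W ht _ _).mp
      (canForce_play_forcingStrat1 hW η t (Nat.le_of_succ_le ht))
    rw [play_succ_snd _ _ ht, play_succ_fst _ _ ht]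
    exact Classical.epsilon_spec hgood _

lemma not_canForce_play_spoilingStrat2 (hW : ¬ CanForce W 0 Fin.elim0 Fin.elim0)
    (ξ : Strat1 A B N) :
    ∀ t ≤ N + 1,
      ¬ CanForce W t (play ξ (spoilingStrat2 W) t).1 (play ξ (spoilingStrat2 W) t).2
  | 0, _ => hW
  | t + 1, ht => by
    have hbad := not_canForce_play_spoilingStrat2 hW ξ t (Nat.le_of_succ_le ht)
    rw [canForce_of_lt W ht] at hbad
    simp only [not_exists, not_forall] at hbad
    rw [play_succ_snd _ _ ht, play_succ_fst _ _ ht]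
    exact Classical.epsilon_spec (hbad _)

theorem exists_forall_hist_mem_or_exists_forall_hist_not_mem :
    (∃ ξ : Strat1 A B N, ∀ η, hist ξ η ∈ W) ∨
      (∃ η : Strat2 A B N, ∀ ξ, hist ξ η ∉ W) := by
  by_cases hW : CanForce W 0 Fin.elim0 Fin.elim0
  · exact .inl ⟨forcingStrat1 W, fun η =>
      (canForce_last W _ _).mp (canForce_play_forcingStrat1 W hW η (N + 1) le_rfl)⟩
  · exact .inr ⟨spoilingStrat2 W, fun ξ =>
      mt (canForce_last W _ _).mpr (not_canForce_play_spoilingStrat2 W hW ξ (N + 1) le_rfl)⟩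

end Determinacy

section Basic

variable {A B : Type*} {N : ℕ}

/-- Player 1's own moves under `ξ`, recomputed from the rival's moves. -/
noncomputable def Strat1.replay [Nonempty A] (ξ : Strat1 A B N) :
    (t : ℕ) → (Fin t → B) → Fin t → A
  | 0, _ => Fin.elim0
  | t + 1, bs =>
      let as := ξ.replay t (Fin.init bs)
      if h : t < N + 1 then Fin.snoc as (ξ ⟨t, h⟩ as (Fin.init bs))
      else fun _ => Classical.arbitrary A

/-- Player 2's own moves under `η`, recomputed from the rival's moves. -/
noncomputable def Strat2.replay [Nonempty B] (η : Strat2 A B N) :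
    (t : ℕ) → (Fin t → A) → Fin t → B
  | 0, _ => Fin.elim0
  | t + 1, as =>
      let bs := η.replay t (Fin.init as)
      if h : t < N + 1 then Fin.snoc bs (η ⟨t, h⟩ as bs)
      else fun _ => Classical.arbitrary B

noncomputable def Strat1.toBasic [Nonempty A] (ξ : Strat1 A B N) : Strat1 A B N :=
  fun t _ bs => ξ t (ξ.replay t bs) bs

noncomputable def Strat2.toBasic [Nonempty B] (η : Strat2 A B N) : Strat2 A B N :=
  fun t as _ => η t as (η.replay t (Fin.init as))

lemma Strat1.isBasic1_toBasic [Nonempty A] (ξ : Strat1 A B N) : IsBasic1 ξ.toBasic :=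
  fun _ _ _ _ => rfl

lemma Strat2.isBasic2_toBasic [Nonempty B] (η : Strat2 A B N) : IsBasic2 η.toBasic :=
  fun _ _ _ _ => rfl

variable [Nonempty A] [Nonempty B]

lemma Strat1.replay_play (ξ : Strat1 A B N) (η : Strat2 A B N) :
    ∀ t ≤ N + 1, ξ.replay t (play ξ η t).2 = (play ξ η t).1
  | 0, _ => funext fun i => i.elim0
  | t + 1, ht => by
    rw [play_succ_snd _ _ ht, Strat1.replay, Fin.init_snoc, dif_pos (show t < N + 1 from ht),
      Strat1.replay_play ξ η t (Nat.le_of_succ_le ht), play_succ_fst _ _ ht]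

lemma Strat2.replay_play (ξ : Strat1 A B N) (η : Strat2 A B N) :
    ∀ t ≤ N + 1, η.replay t (play ξ η t).1 = (play ξ η t).2
  | 0, _ => funext fun i => i.elim0
  | t + 1, ht => by
    rw [play_succ_snd _ _ ht, play_succ_fst _ _ ht, Strat2.replay, Fin.init_snoc,
      dif_pos (show t < N + 1 from ht), Strat2.replay_play ξ η t (Nat.le_of_succ_le ht)]

lemma Strat1.play_toBasic (ξ : Strat1 A B N) (η : Strat2 A B N) :
    ∀ t ≤ N + 1, play ξ.toBasic η t = play ξ η t
  | 0, _ => rfl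
  | t + 1, ht => by
    have ih := Strat1.play_toBasic ξ η t (Nat.le_of_succ_le ht)
    have hmove : ξ.toBasic ⟨t, ht⟩ (play ξ η t).1 (play ξ η t).2 =
        ξ ⟨t, ht⟩ (play ξ η t).1 (play ξ η t).2 := by
      rw [Strat1.toBasic, Strat1.replay_play ξ η t (Nat.le_of_succ_le ht)]
    simp only [play, dif_pos (show t < N + 1 from ht), ih, hmove]

lemma Strat2.play_toBasic (ξ : Strat1 A B N) (η : Strat2 A B N) :
    ∀ t ≤ N + 1, play ξ η.toBasic t = play ξ η t
  | 0, _ => rfl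
  | t + 1, ht => by
    have ih := Strat2.play_toBasic ξ η t (Nat.le_of_succ_le ht)
    have hmove : ∀ a, η.toBasic ⟨t, ht⟩ (Fin.snoc (play ξ η t).1 a) (play ξ η t).2 =
        η ⟨t, ht⟩ (Fin.snoc (play ξ η t).1 a) (play ξ η t).2 := fun a => by
      rw [Strat2.toBasic, Fin.init_snoc, Strat2.replay_play ξ η t (Nat.le_of_succ_le ht)]
    simp only [play, dif_pos (show t < N + 1 from ht), ih, hmove]

lemma Strat1.hist_toBasic (ξ : Strat1 A B N) (η : Strat2 A B N) :
    hist ξ.toBasic η = hist ξ η :=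
  Strat1.play_toBasic ξ η (N + 1) le_rfl

lemma Strat2.hist_toBasic (ξ : Strat1 A B N) (η : Strat2 A B N) :
    hist ξ η.toBasic = hist ξ η :=
  Strat2.play_toBasic ξ η (N + 1) le_rfl

end Basic

/-- In any finite-stage two-player game with alternating moves, either
player 1 has a basic winning strategy or player 2 has a basic unbeatable
strategy. -/
theorem win1_or_unbeatable2_basic {A B : Type*} [Nonempty A] [Nonempty B] {N : ℕ}
    (u v : (Fin (N + 1) → A) × (Fin (N + 1) → B) → ℝ) :
    (∃ ξ : Strat1 A B N, IsBasic1 ξ ∧ Winning1 u v ξ) ∨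
    (∃ η : Strat2 A B N, IsBasic2 η ∧ Unbeatable2 u v η) := by
  rcases exists_forall_hist_mem_or_exists_forall_hist_not_mem {h | v h < u h} with
    ⟨ξ, hξ⟩ | ⟨η, hη⟩
  · exact .inl ⟨ξ.toBasic, ξ.isBasic1_toBasic, fun η =>
      (Strat1.hist_toBasic ξ η).symm ▸ hξ η⟩
  · exact .inr ⟨η.toBasic, η.isBasic2_toBasic, fun ξ =>
      (Strat2.hist_toBasic ξ η).symm ▸ not_lt.mp (hη ξ)⟩
end
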